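/- Consider a triple of generators (v_{ij}, v_{ki}, v_{jq}) of kQ̄_n with k, q ∉ {i,j} and k ≠ q. Then the quasi-Poisson property {{v_{ij},v_{ki},v_{jq}}} = {{v_{ij},v_{ki},v_{jq}}}_qP holds if and only if the following three conditions are satisfied: (i) either ν^{(j)}_{iq} = 0, or μ^{(i)}_{kj} − μ^{(i)}_{kq} = 0; (ii) either ν^{(i)}_{kj} = 0, or μ^{(j)}_{kq} − μ^{(j)}_{iq} = 0; (iii) ν^{(i)}_{kj} ν^{(j)}_{kq} − ν^{(i)}_{kq} ν^{(j)}_{iq} = 0. -/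

import Mathlib

open TensorProduct

namespace NCQP

variable (𝕜 : Type) [Field 𝕜] [CharZero 𝕜]

/-- A double bracket on a `𝕜`-algebra `A`: a bilinear map `A × A → A ⊗ A` satisfying
cyclic antisymmetry and the Leibniz rule in its second argument (for the outer bimodule
structure on `A ⊗ A`). -/
structure DoubleBracket (A : Type) [Ring A] [Algebra 𝕜 A] where
  br : A →ₗ[𝕜] A →ₗ[𝕜] A ⊗[𝕜] A
  cyclic : ∀ a b : A, br b a = - (TensorProduct.comm 𝕜 A A) (br a b)
  leibniz : ∀ a b c : A,
    br a (b * c) = br a b * ((1 : A) ⊗ₜ[𝕜] c) + ((b : A) ⊗ₜ[𝕜] (1 : A)) * br a c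

variable {𝕜}
variable {A : Type} [Ring A] [Algebra 𝕜 A]

/-- The permutation `τ_(132)` on `A ⊗ A ⊗ A`, sending `a ⊗ b ⊗ c` to `b ⊗ c ⊗ a`. -/
noncomputable def tau132 (𝕜 : Type) [Field 𝕜] (A : Type) [Ring A] [Algebra 𝕜 A] :
    (A ⊗[𝕜] (A ⊗[𝕜] A)) ≃ₗ[𝕜] (A ⊗[𝕜] (A ⊗[𝕜] A)) :=
  (TensorProduct.comm 𝕜 A (A ⊗[𝕜] A)).trans (TensorProduct.assoc 𝕜 A A A)

/-- The permutation `τ_(123)` on `A ⊗ A ⊗ A`, sending `a ⊗ b ⊗ c` to `c ⊗ a ⊗ b`. -/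
noncomputable def tau123 (𝕜 : Type) [Field 𝕜] (A : Type) [Ring A] [Algebra 𝕜 A] :
    (A ⊗[𝕜] (A ⊗[𝕜] A)) ≃ₗ[𝕜] (A ⊗[𝕜] (A ⊗[𝕜] A)) :=
  (tau132 𝕜 A).trans (tau132 𝕜 A)

/-- Extension of a linear map `φ : A → A ⊗ A` to `A ⊗ A → A ⊗ A ⊗ A` acting on the
left factor: `b ⊗ c ↦ φ(b) ⊗ c`. -/
noncomputable def extL (𝕜 : Type) [Field 𝕜] (A : Type) [Ring A] [Algebra 𝕜 A]
    (φ : A →ₗ[𝕜] A ⊗[𝕜] A) : A ⊗[𝕜] A →ₗ[𝕜] A ⊗[𝕜] (A ⊗[𝕜] A) :=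
  (TensorProduct.assoc 𝕜 A A A).toLinearMap.comp (LinearMap.rTensor A φ)

/-- The triple bracket `{{a,b,c}}` associated with a double bracket. -/
noncomputable def tripleBr (D : DoubleBracket 𝕜 A) (a b c : A) : A ⊗[𝕜] (A ⊗[𝕜] A) :=
  extL 𝕜 A (D.br a) (D.br b c) + tau123 𝕜 A (extL 𝕜 A (D.br b) (D.br c a))
    + tau132 𝕜 A (extL 𝕜 A (D.br c) (D.br a b))

/-- The quasi-Poisson trivector term `{{a,b,c}}_qP` associated with a family of
orthogonal idempotents `e`. -/
noncomputable def tripleQP {I : Type} [Fintype I] (e : I → A) (a b c : A) :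
    A ⊗[𝕜] (A ⊗[𝕜] A) :=
  (4 : 𝕜)⁻¹ • ∑ s : I,
    ( (c * e s * a) ⊗ₜ[𝕜] ((e s * b) ⊗ₜ[𝕜] (e s))
    - (c * e s * a) ⊗ₜ[𝕜] ((e s) ⊗ₜ[𝕜] (b * e s))
    - (c * e s) ⊗ₜ[𝕜] ((a * e s * b) ⊗ₜ[𝕜] (e s))
    + (c * e s) ⊗ₜ[𝕜] ((a * e s) ⊗ₜ[𝕜] (b * e s))
    - (e s * a) ⊗ₜ[𝕜] ((e s * b) ⊗ₜ[𝕜] (e s * c))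
    + (e s * a) ⊗ₜ[𝕜] ((e s) ⊗ₜ[𝕜] (b * e s * c))
    + (e s) ⊗ₜ[𝕜] ((a * e s * b) ⊗ₜ[𝕜] (e s * c))
    - (e s) ⊗ₜ[𝕜] ((a * e s) ⊗ₜ[𝕜] (b * e s * c)) )

variable (𝕜)

/-- Generators of the path algebra of the quiver `Q̄_n`: one idempotent `E i` per vertex
and one arrow `V i j : j → i` for each ordered pair of distinct vertices. -/
inductive QGen (n : ℕ) : Type
  | E : Fin n → QGen n
  | V : Fin n → Fin n → QGen n

/-- The defining relations of the path algebra of `Q̄_n`. -/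
inductive QRel (n : ℕ) : FreeAlgebra 𝕜 (QGen n) → FreeAlgebra 𝕜 (QGen n) → Prop
  | orth (i j : Fin n) :
      QRel n (FreeAlgebra.ι 𝕜 (QGen.E i) * FreeAlgebra.ι 𝕜 (QGen.E j))
        (if i = j then FreeAlgebra.ι 𝕜 (QGen.E i) else 0)
  | sum_one :
      QRel n (∑ i : Fin n, FreeAlgebra.ι 𝕜 (QGen.E i)) 1
  | supp (i j : Fin n) :
      QRel n (FreeAlgebra.ι 𝕜 (QGen.V i j))
        (FreeAlgebra.ι 𝕜 (QGen.E i) * FreeAlgebra.ι 𝕜 (QGen.V i j) *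
          FreeAlgebra.ι 𝕜 (QGen.E j))
  | diag (i : Fin n) :
      QRel n (FreeAlgebra.ι 𝕜 (QGen.V i i)) 0

/-- The path algebra `𝕜 Q̄_n` of the double of an ordering of the complete `n`-partite
graph on `n` vertices. -/
abbrev PathAlg (n : ℕ) : Type := RingQuot (QRel 𝕜 n)

/-- The vertex idempotents `e i` of `𝕜 Q̄_n`. -/
noncomputable def pe (n : ℕ) (i : Fin n) : PathAlg 𝕜 n :=
  RingQuot.mkAlgHom 𝕜 (QRel 𝕜 n) (FreeAlgebra.ι 𝕜 (QGen.E i))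

/-- The arrows `v i j : j → i` of `𝕜 Q̄_n`. -/
noncomputable def pv (n : ℕ) (i j : Fin n) : PathAlg 𝕜 n :=
  RingQuot.mkAlgHom 𝕜 (QRel 𝕜 n) (FreeAlgebra.ι 𝕜 (QGen.V i j))

/-- The data of coefficient matrices `α, β, μ, ν` and scalars `κ`, together with a
`B`-linear double bracket on the path algebra `𝕜 Q̄_n` whose values on the generators
are given by the formulas (vv0)–(vvopp); `α s i j` stands for `α^{(s)}_{ij}` and
`κ i a j` stands for `κ_a^{(i,j)}`. -/
structure BracketData (n : ℕ) where
  α : Fin n → Fin n → Fin n → 𝕜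
  β : Fin n → Fin n → Fin n → 𝕜
  μ : Fin n → Fin n → Fin n → 𝕜
  ν : Fin n → Fin n → Fin n → 𝕜
  κ : Fin n → Fin n → Fin n → 𝕜
  D : DoubleBracket 𝕜 (PathAlg 𝕜 n)
  hα_skew : ∀ s i j, α s i j = - α s j i
  hα_row : ∀ s j, α s s j = 0
  hα_col : ∀ s j, α s j s = 0
  hβ_skew : ∀ s i j, β s i j = - β s j i
  hβ_row : ∀ s j, β s s j = 0
  hβ_col : ∀ s j, β s j s = 0
  hμ_diag : ∀ s i, μ s i i = 0
  hμ_row : ∀ s j, μ s s j = 0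
  hμ_col : ∀ s j, μ s j s = 0
  hν_diag : ∀ s i, ν s i i = 0
  hν_row : ∀ s j, ν s s j = 0
  hν_col : ∀ s j, ν s j s = 0
  hκ : ∀ i a j, ¬ (j < a ∧ a < i) → κ i a j = 0
  /-- the bracket vanishes on the idempotents, i.e. it is `B`-linear -/
  hB : ∀ s, D.br (pe 𝕜 n s) = 0
  hvv : ∀ i j, D.br (pv 𝕜 n i j) (pv 𝕜 n i j) = 0
  hdisj : ∀ i j p q, i ≠ p → i ≠ q → j ≠ p → j ≠ q →
    D.br (pv 𝕜 n i j) (pv 𝕜 n p q) = 0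
  hbr_α : ∀ i j l, i ≠ j → l ≠ j →
    D.br (pv 𝕜 n i j) (pv 𝕜 n l j) = α j i l • (pv 𝕜 n l j ⊗ₜ[𝕜] pv 𝕜 n i j)
  hbr_β : ∀ i j l, j ≠ i → l ≠ i →
    D.br (pv 𝕜 n i j) (pv 𝕜 n i l) = β i j l • (pv 𝕜 n i j ⊗ₜ[𝕜] pv 𝕜 n i l)
  hbr_μν : ∀ i j l, i ≠ j → l ≠ j → i ≠ l →
    D.br (pv 𝕜 n i j) (pv 𝕜 n j l) =
      μ j i l • (pe 𝕜 n j ⊗ₜ[𝕜] (pv 𝕜 n i j * pv 𝕜 n j l))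
      + ν j i l • (pe 𝕜 n j ⊗ₜ[𝕜] pv 𝕜 n i l)
  hbr_μν' : ∀ i j l, i ≠ j → l ≠ i → l ≠ j →
    D.br (pv 𝕜 n i j) (pv 𝕜 n l i) =
      - (μ i l j • ((pv 𝕜 n l i * pv 𝕜 n i j) ⊗ₜ[𝕜] pe 𝕜 n i))
      - ν i l j • (pv 𝕜 n l j ⊗ₜ[𝕜] pe 𝕜 n i)
  hbr_loop : ∀ i j, i ≠ j →
    D.br (pv 𝕜 n i j) (pv 𝕜 n j i) =
      (if j < i then (1 : 𝕜) else -1) •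
        ( pe 𝕜 n j ⊗ₜ[𝕜] pe 𝕜 n i
          + (2 : 𝕜)⁻¹ • ((pv 𝕜 n j i * pv 𝕜 n i j) ⊗ₜ[𝕜] pe 𝕜 n i)
          + (2 : 𝕜)⁻¹ • (pe 𝕜 n j ⊗ₜ[𝕜] (pv 𝕜 n i j * pv 𝕜 n j i)) )
      + ∑ a : Fin n, κ i a j • (pe 𝕜 n j ⊗ₜ[𝕜] (pv 𝕜 n i a * pv 𝕜 n a i))
      - ∑ b : Fin n, κ j b i • ((pv 𝕜 n j b * pv 𝕜 n b j) ⊗ₜ[𝕜] pe 𝕜 n i)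



set_option linter.unusedSectionVars false
set_option maxHeartbeats 1000000
set_option synthInstance.maxHeartbeats 1000000

open Matrix

-- sum of diagonal std basis matrices
lemma sum_std_diag (n : ℕ) : (∑ i : Fin n, single i i (1:𝕜)) = 1 := by
  ext a b
  simp only [Finset.sum_apply, Matrix.sum_apply, single, of_apply, one_apply]
  by_cases h : a = b
  · subst h; simp
  · rw [Finset.sum_eq_zero, if_neg h]
    intro x _
    by_cases hx : x = a <;> simp [hx, h]

noncomputable def repF (n : ℕ) (w : Fin n × Fin n → 𝕜) : QGen n → Matrix (Fin n) (Fin n) 𝕜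
  | .E i => single i i 1
  | .V i j => if i = j then 0 else single i j (w (i, j))

noncomputable def rep (n : ℕ) (w : Fin n × Fin n → 𝕜) : PathAlg 𝕜 n →ₐ[𝕜] Matrix (Fin n) (Fin n) 𝕜 :=
  RingQuot.liftAlgHom 𝕜 ⟨FreeAlgebra.lift 𝕜 (repF 𝕜 n w), by
    intro x y h
    induction h with
    | orth i j =>
        simp only [_root_.map_mul, FreeAlgebra.lift_ι_apply, repF]
        by_cases h : i = j
        · subst h; simp [repF, single_mul_single_same]
        · simp [repF, h, single_mul_single_of_ne]
    | sum_one =>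
        simp only [map_sum, FreeAlgebra.lift_ι_apply, repF, _root_.map_one]
        exact sum_std_diag 𝕜 n
    | supp i j =>
        simp only [_root_.map_mul, FreeAlgebra.lift_ι_apply, repF]
        by_cases h : i = j
        · simp [h]
        · simp [h, single_mul_single_same]
    | diag i =>
        simp [FreeAlgebra.lift_ι_apply, repF]⟩

lemma rep_pe (n : ℕ) (w : Fin n × Fin n → 𝕜) (i : Fin n) :
    rep 𝕜 n w (pe 𝕜 n i) = single i i 1 := by
  rw [rep, pe, RingQuot.liftAlgHom_mkAlgHom_apply, FreeAlgebra.lift_ι_apply]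
  rfl

lemma rep_pv (n : ℕ) (w : Fin n × Fin n → 𝕜) (i j : Fin n) (h : i ≠ j) :
    rep 𝕜 n w (pv 𝕜 n i j) = single i j (w (i, j)) := by
  rw [rep, pv, RingQuot.liftAlgHom_mkAlgHom_apply, FreeAlgebra.lift_ι_apply]
  simp [repF, if_neg h]

omit [CharZero 𝕜] in
lemma hpe_mul (n : ℕ) (s t : Fin n) :
    pe 𝕜 n s * pe 𝕜 n t = if s = t then pe 𝕜 n s else 0 := by
  have h := RingQuot.mkAlgHom_rel 𝕜 (QRel.orth (𝕜 := 𝕜) (n := n) s t)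
  rw [_root_.map_mul] at h
  split_ifs at h ⊢ with hst
  · exact h
  · exact h.trans (map_zero _)

omit [CharZero 𝕜] in
lemma pv_supp (n : ℕ) (i j : Fin n) :
    pv 𝕜 n i j = pe 𝕜 n i * pv 𝕜 n i j * pe 𝕜 n j := by
  have h := RingQuot.mkAlgHom_rel 𝕜 (QRel.supp (𝕜 := 𝕜) (n := n) i j)
  rw [_root_.map_mul, _root_.map_mul] at h
  exact h

omit [CharZero 𝕜] in
lemma pe_pv (n : ℕ) (s i j : Fin n) :
    pe 𝕜 n s * pv 𝕜 n i j = if s = i then pv 𝕜 n i j else 0 := by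
  conv_lhs => rw [pv_supp 𝕜 n i j]
  rw [← mul_assoc, ← mul_assoc, hpe_mul]
  split_ifs with h
  · subst h; exact (pv_supp 𝕜 n s j).symm
  · simp

omit [CharZero 𝕜] in
lemma pv_pe (n : ℕ) (s i j : Fin n) :
    pv 𝕜 n i j * pe 𝕜 n s = if j = s then pv 𝕜 n i j else 0 := by
  conv_lhs => rw [pv_supp 𝕜 n i j]
  rw [mul_assoc, mul_assoc, hpe_mul]
  split_ifs with h
  · subst h; rw [← mul_assoc]; exact (pv_supp 𝕜 n i j).symm
  · simp

noncomputable def entryLM (n : ℕ) (p q : Fin n) : Matrix (Fin n) (Fin n) 𝕜 →ₗ[𝕜] 𝕜 where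
  toFun M := M p q
  map_add' := by intros; simp
  map_smul' := by intros; simp

noncomputable def ell (n : ℕ) (w : Fin n × Fin n → 𝕜) (p q : Fin n) :
    PathAlg 𝕜 n →ₗ[𝕜] 𝕜 :=
  (entryLM 𝕜 n p q).comp (rep 𝕜 n w).toLinearMap

noncomputable def F3 (n : ℕ) (w : Fin n × Fin n → 𝕜) (p1 q1 p2 q2 p3 q3 : Fin n) :
    PathAlg 𝕜 n ⊗[𝕜] (PathAlg 𝕜 n ⊗[𝕜] PathAlg 𝕜 n) →ₗ[𝕜] 𝕜 :=
  (TensorProduct.lid 𝕜 𝕜).toLinearMap.comp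
    (TensorProduct.map (ell 𝕜 n w p1 q1)
      ((TensorProduct.lid 𝕜 𝕜).toLinearMap.comp
        (TensorProduct.map (ell 𝕜 n w p2 q2) (ell 𝕜 n w p3 q3))))

lemma F3_tmul (n : ℕ) (w : Fin n × Fin n → 𝕜) (p1 q1 p2 q2 p3 q3 : Fin n)
    (x y z : PathAlg 𝕜 n) :
    F3 𝕜 n w p1 q1 p2 q2 p3 q3 (x ⊗ₜ[𝕜] (y ⊗ₜ[𝕜] z)) =
      ell 𝕜 n w p1 q1 x * (ell 𝕜 n w p2 q2 y * ell 𝕜 n w p3 q3 z) := by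
  simp [F3, TensorProduct.map_tmul, TensorProduct.lid_tmul, smul_eq_mul]

lemma ell_pe (n : ℕ) (w : Fin n × Fin n → 𝕜) (s : Fin n) :
    ell 𝕜 n w s s (pe 𝕜 n s) = 1 := by
  simp [ell, entryLM, rep_pe, single]
  exact if_pos ⟨rfl, rfl⟩

lemma ell_pv (n : ℕ) (w : Fin n × Fin n → 𝕜) (p q : Fin n) (h : p ≠ q) :
    ell 𝕜 n w p q (pv 𝕜 n p q) = w (p, q) := by
  simp [ell, entryLM, rep_pv 𝕜 n w p q h, single]
  exact if_pos ⟨rfl, rfl⟩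

lemma ell_pv_mul (n : ℕ) (w : Fin n × Fin n → 𝕜) (p r q : Fin n)
    (h1 : p ≠ r) (h2 : r ≠ q) :
    ell 𝕜 n w p q (pv 𝕜 n p r * pv 𝕜 n r q) = w (p, r) * w (r, q) := by
  simp only [ell, LinearMap.comp_apply, AlgHom.toLinearMap_apply, _root_.map_mul,
    rep_pv 𝕜 n w p r h1, rep_pv 𝕜 n w r q h2, single_mul_single_same]
  simp [entryLM, single]
  exact if_pos ⟨rfl, rfl⟩

/-- Linear independence of the three tensors. -/
lemma indep (n : ℕ) (i j m q : Fin n)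
    (hij : i ≠ j) (hmi : m ≠ i) (hmj : m ≠ j) (hqi : q ≠ i) (hqj : q ≠ j) (hmq : m ≠ q)
    (c1 c2 c3 : 𝕜)
    (h : c1 • (pe 𝕜 n j ⊗ₜ[𝕜] (pe 𝕜 n i ⊗ₜ[𝕜] (pv 𝕜 n m j * pv 𝕜 n j q)))
       + c2 • (pe 𝕜 n j ⊗ₜ[𝕜] (pe 𝕜 n i ⊗ₜ[𝕜] (pv 𝕜 n m i * pv 𝕜 n i q)))
       + c3 • (pe 𝕜 n j ⊗ₜ[𝕜] (pe 𝕜 n i ⊗ₜ[𝕜] pv 𝕜 n m q)) = 0) :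
    c1 = 0 ∧ c2 = 0 ∧ c3 = 0 := by
  classical
  have key : ∀ w : Fin n × Fin n → 𝕜,
      c1 * (w (m, j) * w (j, q)) + c2 * (w (m, i) * w (i, q)) + c3 * w (m, q) = 0 := by
    intro w
    have h2 := congrArg (F3 𝕜 n w j j i i m q) h
    have hz : F3 𝕜 n w j j i i m q 0 = 0 := map_zero _
    simp only [_root_.map_add, _root_.map_smul, hz, F3_tmul, ell_pe,
      ell_pv 𝕜 n w m q hmq, ell_pv_mul 𝕜 n w m j q hmj (Ne.symm hqj),
      ell_pv_mul 𝕜 n w m i q hmi (Ne.symm hqi), smul_eq_mul, one_mul] at h2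
    linear_combination h2
  refine ⟨?_, ?_, ?_⟩
  · have := key (fun p => if p = (m, j) ∨ p = (j, q) then 1 else 0)
    simp only [Prod.mk.injEq] at this
    simpa [hij, hmi, hmj, hqi, hqj, hmq, Ne.symm hij, Ne.symm hmi, Ne.symm hmj,
      Ne.symm hqi, Ne.symm hqj, Ne.symm hmq] using this
  · have := key (fun p => if p = (m, i) ∨ p = (i, q) then 1 else 0)
    simp only [Prod.mk.injEq] at this
    simpa [hij, hmi, hmj, hqi, hqj, hmq, Ne.symm hij, Ne.symm hmi, Ne.symm hmj,
      Ne.symm hqi, Ne.symm hqj, Ne.symm hmq] using this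
  · have := key (fun p => if p = (m, q) then 1 else 0)
    simp only [Prod.mk.injEq] at this
    simpa [hij, hmi, hmj, hqi, hqj, hmq, Ne.symm hij, Ne.symm hmi, Ne.symm hmj,
      Ne.symm hqi, Ne.symm hqj, Ne.symm hmq] using this


/-- Case 3.1.b, Lemma 5.7. For a triple `(v_{ij}, v_{ki}, v_{jq})`
with `k, q ∉ {i,j}` and `k ≠ q`, the quasi-Poisson property holds iff the three stated
conditions hold. Here `m` plays the role of the index `k`. -/
theorem statement_14 {𝕜 : Type} [Field 𝕜] [CharZero 𝕜] {n : ℕ}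
    (S : BracketData 𝕜 n) (i j m q : Fin n)
    (hij : i ≠ j) (hmi : m ≠ i) (hmj : m ≠ j) (hqi : q ≠ i) (hqj : q ≠ j) (hmq : m ≠ q) :
    tripleBr S.D (pv 𝕜 n i j) (pv 𝕜 n m i) (pv 𝕜 n j q)
        = tripleQP (pe 𝕜 n) (pv 𝕜 n i j) (pv 𝕜 n m i) (pv 𝕜 n j q)
      ↔ ( (S.ν j i q = 0 ∨ S.μ i m j - S.μ i m q = 0)
        ∧ (S.ν i m j = 0 ∨ S.μ j m q - S.μ j i q = 0)
        ∧ (S.ν i m j * S.ν j m q - S.ν i m q * S.ν j i q = 0) ) := by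
  classical
  have pe_pv_self : ∀ p r : Fin n, pe 𝕜 n p * pv 𝕜 n p r = pv 𝕜 n p r := fun p r => by
    rw [pe_pv, if_pos rfl]
  have hvv0 : ∀ p r p' r' : Fin n, r ≠ p' → pv 𝕜 n p r * pv 𝕜 n p' r' = 0 := by
    intro p r p' r' h
    rw [← pe_pv_self p' r', ← mul_assoc, pv_pe, if_neg h, zero_mul]
  have Hcea : ∀ s, pv 𝕜 n j q * pe 𝕜 n s * pv 𝕜 n i j = 0 := by
    intro s
    rw [mul_assoc, pe_pv]
    split_ifs with h
    · exact hvv0 _ _ _ _ hqi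
    · rw [mul_zero]
  have Haeb : ∀ s, pv 𝕜 n i j * pe 𝕜 n s * pv 𝕜 n m i = 0 := by
    intro s
    rw [mul_assoc, pe_pv]
    split_ifs with h
    · exact hvv0 _ _ _ _ (Ne.symm hmj)
    · rw [mul_zero]
  have Hbec : ∀ s, pv 𝕜 n m i * pe 𝕜 n s * pv 𝕜 n j q = 0 := by
    intro s
    rw [mul_assoc, pe_pv]
    split_ifs with h
    · exact hvv0 _ _ _ _ hij
    · rw [mul_zero]
  have H4 : ∀ s : Fin n, (pv 𝕜 n j q * pe 𝕜 n s) ⊗ₜ[𝕜]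
      ((pv 𝕜 n i j * pe 𝕜 n s) ⊗ₜ[𝕜] (pv 𝕜 n m i * pe 𝕜 n s)) = 0 := by
    intro s
    by_cases h : s = j
    · rw [h, pv_pe 𝕜 n j j q, if_neg hqj]; simp
    · rw [pv_pe 𝕜 n s i j, if_neg (fun hh => h hh.symm)]; simp
  have H5 : ∀ s : Fin n, (pe 𝕜 n s * pv 𝕜 n i j) ⊗ₜ[𝕜]
      ((pe 𝕜 n s * pv 𝕜 n m i) ⊗ₜ[𝕜] (pe 𝕜 n s * pv 𝕜 n j q)) = 0 := by
    intro s
    by_cases h : s = i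
    · rw [h, pe_pv 𝕜 n i m i, if_neg (Ne.symm hmi)]; simp
    · rw [pe_pv 𝕜 n s i j, if_neg h]; simp
  have hQP : tripleQP (𝕜 := 𝕜) (pe 𝕜 n) (pv 𝕜 n i j) (pv 𝕜 n m i) (pv 𝕜 n j q) = 0 := by
    rw [tripleQP, Finset.sum_eq_zero, smul_zero]
    intro s _
    rw [Hcea, Haeb, Hbec, H4, H5]
    simp only [TensorProduct.zero_tmul, TensorProduct.tmul_zero, sub_zero, add_zero,
      zero_sub, neg_zero, zero_add, neg_neg, sub_self]
  -- bracket values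
  have hbc : S.D.br (pv 𝕜 n m i) (pv 𝕜 n j q) = 0 :=
    S.hdisj m i j q hmj hmq hij (Ne.symm hqi)
  have hca : S.D.br (pv 𝕜 n j q) (pv 𝕜 n i j) =
      -(S.μ j i q • ((pv 𝕜 n i j * pv 𝕜 n j q) ⊗ₜ[𝕜] pe 𝕜 n j))
      - S.ν j i q • (pv 𝕜 n i q ⊗ₜ[𝕜] pe 𝕜 n j) :=
    S.hbr_μν' j q i (Ne.symm hqj) hij (Ne.symm hqi)
  have hab : S.D.br (pv 𝕜 n i j) (pv 𝕜 n m i) =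
      -(S.μ i m j • ((pv 𝕜 n m i * pv 𝕜 n i j) ⊗ₜ[𝕜] pe 𝕜 n i))
      - S.ν i m j • (pv 𝕜 n m j ⊗ₜ[𝕜] pe 𝕜 n i) :=
    S.hbr_μν' i j m hij hmi hmj
  have hbij : S.D.br (pv 𝕜 n m i) (pv 𝕜 n i j) =
      S.μ i m j • (pe 𝕜 n i ⊗ₜ[𝕜] (pv 𝕜 n m i * pv 𝕜 n i j))
      + S.ν i m j • (pe 𝕜 n i ⊗ₜ[𝕜] pv 𝕜 n m j) :=
    S.hbr_μν m i j hmi (Ne.symm hij) hmj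
  have hbiq : S.D.br (pv 𝕜 n m i) (pv 𝕜 n i q) =
      S.μ i m q • (pe 𝕜 n i ⊗ₜ[𝕜] (pv 𝕜 n m i * pv 𝕜 n i q))
      + S.ν i m q • (pe 𝕜 n i ⊗ₜ[𝕜] pv 𝕜 n m q) :=
    S.hbr_μν m i q hmi hqi hmq
  have hcmj : S.D.br (pv 𝕜 n j q) (pv 𝕜 n m j) =
      -(S.μ j m q • ((pv 𝕜 n m j * pv 𝕜 n j q) ⊗ₜ[𝕜] pe 𝕜 n j))
      - S.ν j m q • (pv 𝕜 n m q ⊗ₜ[𝕜] pe 𝕜 n j) :=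
    S.hbr_μν' j q m (Ne.symm hqj) hmj hmq
  have hcmi : S.D.br (pv 𝕜 n j q) (pv 𝕜 n m i) = 0 :=
    S.hdisj j q m i (Ne.symm hmj) (Ne.symm hij) (Ne.symm hmq) hqi
  have hbP : S.D.br (pv 𝕜 n m i) (pv 𝕜 n i j * pv 𝕜 n j q) =
      S.μ i m j • (pe 𝕜 n i ⊗ₜ[𝕜] (pv 𝕜 n m i * pv 𝕜 n i j * pv 𝕜 n j q))
      + S.ν i m j • (pe 𝕜 n i ⊗ₜ[𝕜] (pv 𝕜 n m j * pv 𝕜 n j q)) := by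
    rw [S.D.leibniz, hbij, hbc, mul_zero, add_zero, add_mul]
    simp only [smul_mul_assoc, Algebra.TensorProduct.tmul_mul_tmul, mul_one]
  have hcB : S.D.br (pv 𝕜 n j q) (pv 𝕜 n m i * pv 𝕜 n i j) =
      -(S.μ j i q • ((pv 𝕜 n m i * pv 𝕜 n i j * pv 𝕜 n j q) ⊗ₜ[𝕜] pe 𝕜 n j))
      - S.ν j i q • ((pv 𝕜 n m i * pv 𝕜 n i q) ⊗ₜ[𝕜] pe 𝕜 n j) := by
    rw [S.D.leibniz, hcmi, hca]
    simp only [zero_mul, zero_add, mul_sub, mul_neg, mul_smul_comm,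
      Algebra.TensorProduct.tmul_mul_tmul, one_mul, mul_one, ← mul_assoc]
  have key : tripleBr S.D (pv 𝕜 n i j) (pv 𝕜 n m i) (pv 𝕜 n j q) =
      (S.ν i m j * (S.μ j m q - S.μ j i q)) •
        (pe 𝕜 n j ⊗ₜ[𝕜] (pe 𝕜 n i ⊗ₜ[𝕜] (pv 𝕜 n m j * pv 𝕜 n j q)))
      + (S.ν j i q * (S.μ i m j - S.μ i m q)) •
        (pe 𝕜 n j ⊗ₜ[𝕜] (pe 𝕜 n i ⊗ₜ[𝕜] (pv 𝕜 n m i * pv 𝕜 n i q)))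
      + (S.ν i m j * S.ν j m q - S.ν i m q * S.ν j i q) •
        (pe 𝕜 n j ⊗ₜ[𝕜] (pe 𝕜 n i ⊗ₜ[𝕜] pv 𝕜 n m q)) := by
    rw [tripleBr, hbc, hca, hab]
    simp only [_root_.map_zero, _root_.map_neg, _root_.map_sub, _root_.map_smul, extL,
      LinearMap.coe_comp, Function.comp_apply, LinearEquiv.coe_coe, LinearMap.rTensor_tmul]
    rw [hbP, hbiq, hcB, hcmj]
    simp only [TensorProduct.add_tmul, TensorProduct.sub_tmul, TensorProduct.neg_tmul,
      TensorProduct.smul_tmul', _root_.map_add, _root_.map_sub, _root_.map_neg,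
      _root_.map_smul, TensorProduct.assoc_tmul, tau123, tau132, LinearEquiv.trans_apply,
      TensorProduct.comm_tmul]
    simp only [← TensorProduct.smul_tmul', TensorProduct.tmul_smul]
    module
  rw [hQP, key]
  constructor
  · intro h
    obtain ⟨h1, h2, h3⟩ := indep 𝕜 n i j m q hij hmi hmj hqi hqj hmq _ _ _ h
    exact ⟨mul_eq_zero.mp h2, mul_eq_zero.mp h1, h3⟩
  · rintro ⟨h1, h2, h3⟩
    rw [mul_eq_zero.mpr h1, mul_eq_zero.mpr h2, h3]
    simp


end NCQP
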